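/- arXiv:2101.11481 — 5 statements merged into one kernel-verified Lean document; each statement's English description precedes it below -/
import Mathlib

section
/- In a real Banach space X, the Kuratowski measure of noncompactness of the convex hull of a bounded set equals that of the set: α(co(B)) = α(B) for all bounded B ⊆ X. -/
/-!
Cover `B` by finitely many nonempty sets `E i ⊆ B` of diameter at most `d`. Every point
of `co B` is a convex combination `∑ i, λ i • y i` with `y i ∈ co (E i)`. For frozen weights
`μ` these combinations form a set of diameter at most `d`, because `co (E i)` has the
diameter of `E i`. The simplex of weights is compact, so finitely many `μ` form a `δ`-net of
it; since `co B` is bounded, moving `λ` to the nearest `μ` moves the point by less than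
`ε / 2`. Hence the `ε / 2`-thickenings of these finitely many sets cover `co B` and have
diameter at most `d + ε`. The reverse inequality holds because `B ⊆ co B`.
-/

/-- The Kuratowski measure of noncompactness: the infimum of all `d > 0` such that `B`
can be covered by finitely many sets of diameter at most `d`. -/
noncomputable def kuratowski {M : Type*} [PseudoMetricSpace M] (B : Set M) : ℝ :=
  sInf {d : ℝ | 0 < d ∧ ∃ F : Finset (Set M),
    (B ⊆ ⋃ E ∈ F, E) ∧ ∀ E ∈ F, EMetric.diam E ≤ ENNReal.ofReal d}

open Finset Metric

theorem Real.sInf_eq_sInf_of_subset_of_forall_add_mem {A A' : Set ℝ} (hA : BddBelow A)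
    (hsub : A' ⊆ A) (hadd : ∀ a ∈ A, ∀ ε > 0, a + ε ∈ A') : sInf A' = sInf A := by
  rcases A.eq_empty_or_nonempty with rfl | ⟨a, ha⟩
  · rw [Set.subset_empty_iff.1 hsub]
  refine le_antisymm (le_csInf ⟨a, ha⟩ fun b hb => le_of_forall_pos_le_add fun ε hε => ?_)
    (csInf_le_csInf hA ⟨a + 1, hadd a ha 1 one_pos⟩ hsub)
  exact csInf_le (hA.mono hsub) (hadd b hb ε hε)

section ConvexHull

variable {𝕜 E : Type*} [Field 𝕜] [LinearOrder 𝕜] [IsStrictOrderedRing 𝕜] [AddCommGroup E]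
  [Module 𝕜 E]

theorem exists_sum_smul_eq_of_mem_convexHull_iUnion {ι : Type*} [Fintype ι] {s : ι → Set E}
    (hs : ∀ i, (s i).Nonempty) {x : E} (hx : x ∈ convexHull 𝕜 (⋃ i, s i)) :
    ∃ w ∈ stdSimplex 𝕜 ι, ∃ y : ι → E, (∀ i, y i ∈ convexHull 𝕜 (s i)) ∧
      ∑ i, w i • y i = x := by
  classical
  obtain ⟨κ, _, v, z, hv₀, hv₁, hz, rfl⟩ := mem_convexHull_iff_exists_fintype.1 hx
  choose c hc using fun j => Set.mem_iUnion.1 (hz j)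
  set fiber : ι → Finset κ := fun i => univ.filter (c · = i)
  set w : ι → 𝕜 := fun i => ∑ j ∈ fiber i, v j
  have hw₀ : ∀ i, 0 ≤ w i := fun i => sum_nonneg fun j _ => hv₀ j
  refine ⟨w, ⟨hw₀, (sum_fiberwise univ c v).trans hv₁⟩,
    fun i => if w i = 0 then (hs i).some else (fiber i).centerMass v z, fun i => ?_, ?_⟩
  · dsimp only
    split_ifs with h
    · exact subset_convexHull 𝕜 _ (hs i).some_mem
    · refine (fiber i).centerMass_mem_convexHull (fun j _ => hv₀ j) ((hw₀ i).lt_of_ne' h) ?_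
      intro j hj
      rw [← (mem_filter.1 hj).2]
      exact hc j
  · rw [← sum_fiberwise univ c (fun j => v j • z j)]
    refine sum_congr rfl fun i _ => ?_
    dsimp only
    split_ifs with h
    · have hv : ∀ j ∈ fiber i, v j = 0 := (sum_eq_zero_iff_of_nonneg fun j _ => hv₀ j).1 h
      rw [h, zero_smul, sum_eq_zero fun j hj => by rw [hv j hj, zero_smul]]
    · rw [centerMass, smul_inv_smul₀ h]

end ConvexHull

section SeminormedSpace

variable {X : Type*} [SeminormedAddCommGroup X] [NormedSpace ℝ X] {ι : Type*} [Fintype ι]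

theorem dist_sum_smul_sum_smul_le (w w' : ι → ℝ) (y : ι → X) :
    dist (∑ i, w i • y i) (∑ i, w' i • y i) ≤ dist w w' * ∑ i, ‖y i‖ := by
  rw [mul_sum]
  refine dist_sum_sum_le_of_le _ fun i _ => ?_
  rw [dist_eq_norm, ← sub_smul, norm_smul, ← dist_eq_norm]
  exact mul_le_mul_of_nonneg_right (dist_le_pi_dist w w' i) (norm_nonneg _)

theorem ediam_image_sum_smul_le {w : ι → ℝ} (hw : w ∈ stdSimplex ℝ ι) {t : ι → Set X}
    {d : ℝ} (hd : 0 ≤ d) (ht : ∀ i, ediam (t i) ≤ ENNReal.ofReal d) :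
    ediam ((fun y : ι → X => ∑ i, w i • y i) '' Set.univ.pi t) ≤ ENNReal.ofReal d := by
  refine ediam_le ?_
  rintro _ ⟨y, hy, rfl⟩ _ ⟨y', hy', rfl⟩
  rw [edist_le_ofReal hd]
  calc dist (∑ i, w i • y i) (∑ i, w i • y' i) ≤ ∑ i, w i * d := by
        refine dist_sum_sum_le_of_le _ fun i _ => ?_
        rw [dist_smul₀, Real.norm_of_nonneg (hw.1 i)]
        refine mul_le_mul_of_nonneg_left ?_ (hw.1 i)
        exact (edist_le_ofReal hd).1
          ((edist_le_ediam_of_mem (hy i trivial) (hy' i trivial)).trans (ht i))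
    _ = d := by rw [← sum_mul, hw.2, one_mul]

end SeminormedSpace

section FiniteCover

universe u

variable {M : Type u} [PseudoMetricSpace M]

def HasFiniteCoverOfDiamLE (B : Set M) (d : ℝ) : Prop :=
  ∃ F : Finset (Set M), (B ⊆ ⋃ E ∈ F, E) ∧ ∀ E ∈ F, ediam E ≤ ENNReal.ofReal d

theorem kuratowski_eq_sInf (B : Set M) :
    kuratowski B = sInf {d | 0 < d ∧ HasFiniteCoverOfDiamLE B d} :=
  rfl

theorem HasFiniteCoverOfDiamLE.mono {B C : Set M} {d : ℝ} (h : HasFiniteCoverOfDiamLE C d)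
    (hBC : B ⊆ C) : HasFiniteCoverOfDiamLE B d :=
  let ⟨F, hcov, hdiam⟩ := h
  ⟨F, hBC.trans hcov, hdiam⟩

theorem hasFiniteCoverOfDiamLE_of_finite {ι : Type*} {t : Set ι} (ht : t.Finite)
    {U : ι → Set M} {B : Set M} {d : ℝ} (hcov : B ⊆ ⋃ i ∈ t, U i)
    (hdiam : ∀ i ∈ t, ediam (U i) ≤ ENNReal.ofReal d) : HasFiniteCoverOfDiamLE B d := by
  classical
  refine ⟨ht.toFinset.image U, by simpa using hcov, ?_⟩
  simp only [mem_image, Set.Finite.mem_toFinset, forall_exists_index, and_imp]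
  rintro _ i hi rfl
  exact hdiam i hi

theorem HasFiniteCoverOfDiamLE.exists_iUnion_eq {B : Set M} {d : ℝ}
    (h : HasFiniteCoverOfDiamLE B d) :
    ∃ (ι : Type u) (_ : Fintype ι) (s : ι → Set M), (∀ i, (s i).Nonempty) ∧
      (∀ i, ediam (s i) ≤ ENNReal.ofReal d) ∧ ⋃ i, s i = B := by
  classical
  obtain ⟨F, hcov, hdiam⟩ := h
  refine ⟨F.filter fun E => (E ∩ B).Nonempty, inferInstance, fun E => E.1 ∩ B,
    fun E => (mem_filter.1 E.2).2, fun E => ?_, ?_⟩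
  · exact (ediam_mono Set.inter_subset_left).trans (hdiam _ (mem_filter.1 E.2).1)
  · refine subset_antisymm (Set.iUnion_subset fun E => Set.inter_subset_right) fun x hx => ?_
    obtain ⟨E, hEF, hxE⟩ := Set.mem_iUnion₂.1 (hcov hx)
    exact Set.mem_iUnion.2 ⟨⟨E, mem_filter.2 ⟨hEF, x, hxE, hx⟩⟩, hxE, hx⟩

theorem ediam_cthickening_half_le {s : Set M} {d ε : ℝ} (hs : ediam s ≤ ENNReal.ofReal d)
    (hd : 0 ≤ d) (hε : 0 ≤ ε) : ediam (cthickening (ε / 2) s) ≤ ENNReal.ofReal (d + ε) := by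
  have hr : 0 ≤ ε / 2 := by positivity
  calc ediam (cthickening (ε / 2) s) ≤ ediam s + 2 * ENNReal.ofReal (ε / 2) := by
        simpa [ENNReal.ofReal, Real.coe_toNNReal _ hr] using
          ediam_cthickening_le (s := s) (ε / 2).toNNReal
    _ ≤ ENNReal.ofReal (d + ε) := by
        rw [ENNReal.ofReal_add hd hε, two_mul, ← ENNReal.ofReal_add hr hr, add_halves]
        gcongr

end FiniteCover

section ConvexHullCover

variable {X : Type*} [SeminormedAddCommGroup X] [NormedSpace ℝ X]

theorem hasFiniteCoverOfDiamLE_convexHull_iUnion {ι : Type*} [Fintype ι] {s : ι → Set X}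
    (hne : ∀ i, (s i).Nonempty) {d ε : ℝ} (hdiam : ∀ i, ediam (s i) ≤ ENNReal.ofReal d)
    (hd : 0 ≤ d) (hε : 0 < ε) : HasFiniteCoverOfDiamLE (convexHull ℝ (⋃ i, s i)) (d + ε) := by
  have hbdd : Bornology.IsBounded (convexHull ℝ (⋃ i, s i)) :=
    isBounded_convexHull.2 <| Bornology.isBounded_iUnion.2 fun i =>
      isBounded_iff_ediam_ne_top.2 (ne_top_of_le_ne_top ENNReal.ofReal_ne_top (hdiam i))
  obtain ⟨R, hR, hnorm⟩ := hbdd.exists_pos_norm_le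
  set r := ε / 2
  set δ := r / (Fintype.card ι * R + 1)
  have hδ : 0 < δ := by positivity
  obtain ⟨t, hts, htfin, hnet⟩ := (isCompact_stdSimplex ℝ ι).finite_cover_balls hδ
  set C : (ι → ℝ) → Set X := fun μ =>
    (fun y : ι → X => ∑ i, μ i • y i) '' Set.univ.pi fun i => convexHull ℝ (s i)
  refine hasFiniteCoverOfDiamLE_of_finite htfin (U := fun μ => cthickening r (C μ)) ?_ ?_
  · intro x hx
    obtain ⟨w, hw, y, hy, rfl⟩ := exists_sum_smul_eq_of_mem_convexHull_iUnion hne hx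
    obtain ⟨μ, hμt, hwμ⟩ := Set.mem_iUnion₂.1 (hnet hw)
    refine Set.mem_iUnion₂.2
      ⟨μ, hμt, mem_cthickening_of_dist_le _ _ r _ ⟨y, fun i _ => hy i, rfl⟩ ?_⟩
    have hy_norm : ∑ i, ‖y i‖ ≤ Fintype.card ι * R := by
      simpa using sum_le_card_nsmul univ _ R fun i _ =>
        hnorm _ (convexHull_mono (Set.subset_iUnion s i) (hy i))
    calc dist (∑ i, w i • y i) (∑ i, μ i • y i) ≤ dist w μ * ∑ i, ‖y i‖ :=
          dist_sum_smul_sum_smul_le w μ y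
      _ ≤ δ * (Fintype.card ι * R + 1) := by
          gcongr
          · exact (mem_ball.1 hwμ).le
          · linarith
      _ = r := div_mul_cancel₀ _ (by positivity)
  · intro μ hμt
    have hC : ediam (C μ) ≤ ENNReal.ofReal d :=
      ediam_image_sum_smul_le (hts hμt) hd fun i => (convexHull_ediam _).trans_le (hdiam i)
    exact ediam_cthickening_half_le hC hd hε.le

theorem HasFiniteCoverOfDiamLE.convexHull {B : Set X} {d ε : ℝ}
    (h : HasFiniteCoverOfDiamLE B d) (hd : 0 ≤ d) (hε : 0 < ε) :
    HasFiniteCoverOfDiamLE (convexHull ℝ B) (d + ε) := by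
  obtain ⟨ι, _, s, hne, hdiam, rfl⟩ := h.exists_iUnion_eq
  exact hasFiniteCoverOfDiamLE_convexHull_iUnion hne hdiam hd hε

end ConvexHullCover

theorem stmt9_general {X : Type*} [NormedAddCommGroup X] [NormedSpace ℝ X]
    (B : Set X) :
    kuratowski (convexHull ℝ B) = kuratowski B := by
  rw [kuratowski_eq_sInf, kuratowski_eq_sInf]
  refine Real.sInf_eq_sInf_of_subset_of_forall_add_mem ⟨0, fun d hd => hd.1.le⟩
    (fun d hd => ⟨hd.1, hd.2.mono (subset_convexHull ℝ B)⟩)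
    fun d hd ε hε => ⟨add_pos hd.1 hε, hd.2.convexHull hd.1.le hε⟩

/-- Invariance of the Kuratowski measure under convex hulls in a Banach space. -/
theorem stmt9 {X : Type*} [NormedAddCommGroup X] [NormedSpace ℝ X] [CompleteSpace X]
    (B : Set X) (hB : Bornology.IsBounded B) :
    kuratowski (convexHull ℝ B) = kuratowski B :=
  stmt9_general B
end

section
/- For the Hausdorff measure of noncompactness β on a metric space M, and its sequential version β̃(B) = sup{β(C) : C a countable subset of B}, the inequalities (1/2)β(B) ≤ β̃(B) ≤ β(B) hold for every bounded subset B of M. -/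
/-- The Hausdorff (ball) measure of noncompactness: the infimum of all `r > 0` such that `B`
can be covered by finitely many closed balls of radius `r` centered at points of `M`. -/
noncomputable def hausdorffMNC {M : Type*} [PseudoMetricSpace M] (B : Set M) : ℝ :=
  sInf {r : ℝ | 0 < r ∧ ∃ F : Finset M, B ⊆ ⋃ x ∈ F, Metric.closedBall x r}

open Metric in
private lemma hMNC_nonempty {M : Type*} [PseudoMetricSpace M] {B : Set M}
    (hB : Bornology.IsBounded B) :
    {r : ℝ | 0 < r ∧ ∃ F : Finset M, B ⊆ ⋃ x ∈ F, closedBall x r}.Nonempty := by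
  rcases B.eq_empty_or_nonempty with h | ⟨c, hc⟩
  · exact ⟨1, one_pos, ∅, by simp [h]⟩
  · obtain ⟨r, hr⟩ := hB.subset_closedBall c
    refine ⟨max r 1, lt_of_lt_of_le one_pos (le_max_right _ _), {c}, ?_⟩
    intro x hx
    simp only [Finset.mem_singleton, Set.iUnion_iUnion_eq_left]
    exact closedBall_subset_closedBall (le_max_left _ _) (hr hx)

private lemma hMNC_nonneg {M : Type*} [PseudoMetricSpace M] (B : Set M) :
    0 ≤ hausdorffMNC B :=
  Real.sInf_nonneg fun _ hx => hx.1.le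

private lemma hMNC_mono {M : Type*} [PseudoMetricSpace M] {B C : Set M}
    (hB : Bornology.IsBounded B) (hC : C ⊆ B) : hausdorffMNC C ≤ hausdorffMNC B :=
  csInf_le_csInf ⟨0, fun _ hx => hx.1.le⟩ (hMNC_nonempty hB)
    (fun _ hr => ⟨hr.1, hr.2.choose, hC.trans hr.2.choose_spec⟩)

/-- Sadovskii's inequalities: `(1/2) β(B) ≤ β̃(B) ≤ β(B)`, where
`β̃(B) = sup {β(C) : C ⊆ B countable}`. -/
theorem stmt10 {M : Type*} [MetricSpace M] (B : Set M) (hB : Bornology.IsBounded B) :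
    (1 / 2) * hausdorffMNC B ≤
        sSup {r : ℝ | ∃ C : Set M, C ⊆ B ∧ C.Countable ∧ r = hausdorffMNC C} ∧
      sSup {r : ℝ | ∃ C : Set M, C ⊆ B ∧ C.Countable ∧ r = hausdorffMNC C} ≤
        hausdorffMNC B := by
  classical
  set S : Set ℝ := {r : ℝ | ∃ C : Set M, C ⊆ B ∧ C.Countable ∧ r = hausdorffMNC C} with hSdef
  have hub : ∀ s ∈ S, s ≤ hausdorffMNC B := by
    rintro s ⟨C, hCB, _, rfl⟩
    exact hMNC_mono hB hCB
  have hsup_le : sSup S ≤ hausdorffMNC B := Real.sSup_le hub (hMNC_nonneg B)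
  refine ⟨?_, hsup_le⟩
  by_contra hlt
  push_neg at hlt
  set t := sSup S with htdef
  have hbdd : BddAbove S := ⟨hausdorffMNC B, hub⟩
  have hmemS : hausdorffMNC (∅ : Set M) ∈ S :=
    ⟨∅, Set.empty_subset B, Set.countable_empty, rfl⟩
  have ht0 : 0 ≤ t := le_trans (hMNC_nonneg ∅) (le_csSup hbdd hmemS)
  set r := (t + hausdorffMNC B / 2) / 2 with hrdef
  have htr : t < r := by
    have := hlt
    rw [one_div] at this
    nlinarith
  have hr0 : 0 < r := lt_of_le_of_lt ht0 htr
  have h2rB : 2 * r < hausdorffMNC B := by nlinarith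
  -- B cannot be covered by finitely many closed balls of radius 2r
  have hcov : ∀ F : Finset M, ∃ y ∈ B, y ∉ ⋃ x ∈ F, Metric.closedBall x (2 * r) := by
    intro F
    by_contra h
    push_neg at h
    have : hausdorffMNC B ≤ 2 * r :=
      csInf_le ⟨0, fun _ hx => hx.1.le⟩ ⟨by linarith, F, fun y hy => h y hy⟩
    linarith
  choose g hgB hgnot using hcov
  -- greedy construction of a 2r-separated sequence
  set F : ℕ → Finset M := fun n => Nat.rec ∅ (fun _ s => insert (g s) s) n with hFdef
  set x : ℕ → M := fun n => g (F n) with hxdef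
  have hFsucc : ∀ n, F (n + 1) = insert (x n) (F n) := fun n => rfl
  have hFmono : Monotone F := by
    apply monotone_nat_of_le_succ
    intro n
    rw [hFsucc]
    exact Finset.subset_insert _ _
  have hxmem : ∀ m n, m < n → x m ∈ F n := by
    intro m n hmn
    have : x m ∈ F (m + 1) := by rw [hFsucc]; exact Finset.mem_insert_self _ _
    exact hFmono hmn this
  have hsep : ∀ m n, m < n → 2 * r < dist (x n) (x m) := by
    intro m n hmn
    have hnot := hgnot (F n)
    by_contra h
    push_neg at h
    exact hnot (Set.mem_biUnion (hxmem m n hmn) (Metric.mem_closedBall.mpr h))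
  have hsep' : ∀ m n, m ≠ n → 2 * r < dist (x n) (x m) := by
    intro m n hmn
    rcases lt_or_gt_of_ne hmn with h | h
    · exact hsep m n h
    · rw [dist_comm]; exact hsep n m h
  set C : Set M := Set.range x with hCdef
  have hCB : C ⊆ B := by rintro _ ⟨n, rfl⟩; exact hgB _
  have hCcount : C.Countable := Set.countable_range x
  -- hausdorffMNC C ≥ r
  have hrC : r ≤ hausdorffMNC C := by
    refine le_csInf (hMNC_nonempty (hB.subset hCB)) ?_
    rintro r' ⟨hr'0, F', hF'⟩
    by_contra h
    push_neg at h
    have hpick : ∀ n, ∃ y ∈ F', x n ∈ Metric.closedBall y r' := by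
      intro n
      have := hF' ⟨n, rfl⟩
      simpa using this
    choose φ hφF hφd using hpick
    obtain ⟨m, n, hmn, heq⟩ :=
      Finite.exists_ne_map_eq_of_infinite (fun n => (⟨φ n, hφF n⟩ : F'))
    have heqφ : φ m = φ n := by simpa using heq
    have hdm : dist (x m) (φ m) ≤ r' := Metric.mem_closedBall.mp (hφd m)
    have hdn : dist (x n) (φ n) ≤ r' := Metric.mem_closedBall.mp (hφd n)
    have htri : dist (x n) (x m) ≤ dist (x n) (φ n) + dist (φ n) (x m) := dist_triangle _ _ _
    have : dist (φ n) (x m) ≤ r' := by rw [← heqφ, dist_comm]; exact hdm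
    have := hsep' m n hmn
    linarith
  have hCS : hausdorffMNC C ∈ S := ⟨C, hCB, hCcount, rfl⟩
  have : hausdorffMNC C ≤ t := le_csSup hbdd hCS
  linarith
end

section
/- Let M be a metric space and B a subset of M. For any ultrafilter U on an index set I, the Kuratowski measure of noncompactness of the ultrapower (B)_U inside the metric ultrapower (M)_U equals the Kuratowski measure of B: α_M(B) = α_U((B)_U). -/
/-!
Constant families embed `B` isometrically into `(B)_U`, so every cover of `(B)_U` by sets of
diameter `≤ r` restricts to such a cover of `B`. Conversely, a finite cover `E₁, …, Eₙ` of `B`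
induces the cover of `(B)_U` by the sets `{x | x i ∈ Eₖ for U-almost all i}`: a finite union
lies in an ultrafilter only if one of its members does. Two families in the same such set are
at distance `≤ r` for `U`-almost all `i`, hence at ultralimit distance `≤ r`; the ultralimits
exist because `B`, being covered by finitely many sets of bounded diameter, is bounded.
-/

open Filter Set

/-- The Kuratowski measure of noncompactness with respect to an explicit distance
function `d`: the infimum of all `r > 0` such that `B` can be covered by finitely many
sets of `d`-diameter at most `r`. -/
noncomputable def kurD {α : Type*} (d : α → α → ℝ) (B : Set α) : ℝ :=
  sInf {r : ℝ | 0 < r ∧ ∃ F : Finset (Set α),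
    (B ⊆ ⋃ E ∈ F, E) ∧ ∀ E ∈ F, ∀ a ∈ E, ∀ b ∈ E, d a b ≤ r}

def HasFiniteCoverOfDiam {α : Type*} (d : α → α → ℝ) (S : Set α) (r : ℝ) : Prop :=
  ∃ F : Finset (Set α), (S ⊆ ⋃ E ∈ F, E) ∧ ∀ E ∈ F, ∀ a ∈ E, ∀ b ∈ E, d a b ≤ r

theorem kurD_congr {α β : Type*} {d : α → α → ℝ} {d' : β → β → ℝ} {S : Set α} {S' : Set β}
    (h : ∀ r, 0 < r → (HasFiniteCoverOfDiam d S r ↔ HasFiniteCoverOfDiam d' S' r)) :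
    kurD d S = kurD d' S' := by
  unfold kurD
  congr 1
  ext r
  exact and_congr_right (h r)

namespace HasFiniteCoverOfDiam

theorem comap_subtype {α β : Type*} {d : α → α → ℝ} {d' : β → β → ℝ} {S : Set α}
    {S' : Set β} {r : ℝ} (g : S → β) (hg : ∀ a, g a ∈ S')
    (hd : ∀ a b : S, d a b ≤ d' (g a) (g b)) (h : HasFiniteCoverOfDiam d' S' r) :
    HasFiniteCoverOfDiam d S r := by
  classical
  obtain ⟨F, hcover, hdiam⟩ := h
  refine ⟨F.image fun E => Subtype.val '' (g ⁻¹' E), fun a ha => ?_, ?_⟩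
  · obtain ⟨E, hE, hgE⟩ := mem_iUnion₂.mp (hcover (hg ⟨a, ha⟩))
    exact mem_biUnion (Finset.mem_image_of_mem _ hE) ⟨⟨a, ha⟩, hgE, rfl⟩
  · simp only [Finset.forall_mem_image, forall_mem_image]
    exact fun E hE a ha b hb => (hd a b).trans (hdiam E hE _ ha _ hb)

theorem isBounded {M : Type*} [PseudoMetricSpace M] {S : Set M} {r : ℝ}
    (h : HasFiniteCoverOfDiam dist S r) : Bornology.IsBounded S := by
  obtain ⟨F, hcover, hdiam⟩ := h
  refine (Bornology.isBounded_biUnion_finset F).mpr (fun E hE => ?_) |>.subset hcover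
  exact Metric.isBounded_iff.mpr ⟨r, hdiam E hE⟩

end HasFiniteCoverOfDiam

theorem Ultrafilter.tendsto_limUnder_of_isCompact {I X : Type*} [TopologicalSpace X]
    [Nonempty X] (U : Ultrafilter I) {f : I → X} {K : Set X} (hK : IsCompact K)
    (hf : ∀ i, f i ∈ K) :
    Tendsto f U (nhds (limUnder (U : Filter I) f)) := by
  obtain ⟨a, -, ha⟩ := hK.ultrafilter_le_nhds (U.map f)
    (le_principal_iff.mpr (Ultrafilter.mem_map.mpr (univ_mem' hf)))
  exact tendsto_nhds_limUnder ⟨a, ha⟩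

section Ultrapower

variable {I M : Type*} [PseudoMetricSpace M] (U : Ultrafilter I)

noncomputable def ultraDist (x y : I → M) : ℝ :=
  limUnder (U : Filter I) fun i => dist (x i) (y i)

theorem ultraDist_const (a b : M) : ultraDist U (fun _ => a) (fun _ => b) = dist a b :=
  tendsto_const_nhds.limUnder_eq

theorem ultraDist_le_of_eventually_le {x y : I → M} {C r : ℝ}
    (hC : ∀ i, dist (x i) (y i) ≤ C) (hr : ∀ᶠ i in (U : Filter I), dist (x i) (y i) ≤ r) :
    ultraDist U x y ≤ r :=
  le_of_tendsto (U.tendsto_limUnder_of_isCompact isCompact_Icc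
    fun i => (⟨dist_nonneg, hC i⟩ : dist (x i) (y i) ∈ Icc 0 C)) hr

theorem HasFiniteCoverOfDiam.ultrapower {B : Set M} {r : ℝ}
    (h : HasFiniteCoverOfDiam dist B r) :
    HasFiniteCoverOfDiam (fun x y : {f : I → M // ∀ i, f i ∈ B} => ultraDist U x.1 y.1)
      univ r := by
  classical
  obtain ⟨C, hC⟩ := Metric.isBounded_iff.mp h.isBounded
  obtain ⟨F, hcover, hdiam⟩ := h
  refine ⟨F.image fun E => {x | ∀ᶠ i in (U : Filter I), x.1 i ∈ E}, fun x _ => ?_, ?_⟩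
  · have hU : (⋃ E ∈ (F : Set (Set M)), {i | x.1 i ∈ E}) ∈ U :=
      univ_mem' fun i => by simpa using hcover (x.2 i)
    obtain ⟨E, hE, hxE⟩ := (Ultrafilter.finite_biUnion_mem_iff F.finite_toSet).mp hU
    exact mem_biUnion (Finset.mem_image_of_mem _ hE) hxE
  · simp only [Finset.forall_mem_image]
    intro E hE x hx y hy
    refine ultraDist_le_of_eventually_le U (fun i => hC (x.2 i) (y.2 i)) ?_
    filter_upwards [hx, hy] with i hxi hyi
    exact hdiam E hE _ hxi _ hyi

end Ultrapower

theorem stmt11_general {I M : Type*} [MetricSpace M] (U : Ultrafilter I) (B : Set M) :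
    kurD (fun x y : {f : I → M // ∀ i, f i ∈ B} =>
        Filter.limUnder (U : Filter I) (fun i => dist (x.1 i) (y.1 i)))
      Set.univ
    = kurD dist B :=
  kurD_congr fun _ _ =>
    ⟨HasFiniteCoverOfDiam.comap_subtype (fun a => ⟨fun _ => a, fun _ => a.2⟩)
      (fun _ => mem_univ _) (fun a b => (ultraDist_const U a.1 b.1).ge),
    HasFiniteCoverOfDiam.ultrapower U⟩

/-- Lemma 5.2 (Kaczor–Stachura–Walczuk–Zola): for a bounded subset `B` of a metric
space `M` and an ultrafilter `U` on `I`, the Kuratowski measure of the ultrapower `(B)_U`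
(the space of `B`-valued families, with the ultralimit distance
`d_U(x,y) = lim_U d(x_i, y_i)`; passing to equivalence classes changes neither diameters
nor covers) equals the Kuratowski measure of `B`. -/
theorem stmt11 {I M : Type*} [MetricSpace M] (U : Ultrafilter I) (B : Set M)
    (hB : Bornology.IsBounded B) :
    kurD (fun x y : {f : I → M // ∀ i, f i ∈ B} =>
        Filter.limUnder (U : Filter I) (fun i => dist (x.1 i) (y.1 i)))
      Set.univ
    = kurD dist B :=
  stmt11_general U B
end

section
/- Every subset A of a Banach space X contains a countable subset A₀ such that A is strongly finitely representable in A₀. In particular, for every ε > 0 and every convex polyhedron H with vertices in A, there is a convex polyhedron H′ of the same combinatorial type (same number of vertices, same affine dimension) with vertices in A₀ and an affine isomorphism T : aff(H) → aff(H′) with (1−ε)‖x−y‖ ≤ ‖Tx−Ty‖ ≤ (1+ε)‖x−y‖ and Hausdorff distance between vert(T(H)) and vert(H′) less than ε. -/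
/-- `v` is the vertex family of an `(n,m)`-polyhedron: `n + m + 1` distinct points, each an
extreme point of their convex hull (i.e. a genuine vertex), whose affine hull is
`n`-dimensional. -/
def IsPolyVerts {X : Type*} [NormedAddCommGroup X] [NormedSpace ℝ X] (n m : ℕ)
    (v : Fin (n + m + 1) → X) : Prop :=
  Function.Injective v ∧
  (∀ j, v j ∈ Set.extremePoints ℝ (convexHull ℝ (Set.range v))) ∧
  Module.finrank ℝ (vectorSpan ℝ (Set.range v)) = n

/-- `A` is strongly finitely representable in `B`: for every `ε > 0` and every
`(n,m)`-polyhedron with vertices in `A`, there are an `(n,m)`-polyhedron with vertices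
in `B` and an affine isomorphism `T` of the affine hulls which is `(1 ± ε)`-bi-Lipschitz
and moves the vertex set to within Hausdorff distance `ε` of the new vertex set. -/
def StronglyFinRep {X Y : Type*} [NormedAddCommGroup X] [NormedSpace ℝ X]
    [NormedAddCommGroup Y] [NormedSpace ℝ Y] (A : Set X) (B : Set Y) : Prop :=
  ∀ ε > (0 : ℝ), ∀ (n m : ℕ) (v : Fin (n + m + 1) → X),
    IsPolyVerts n m v → Set.range v ⊆ A →
    ∃ w : Fin (n + m + 1) → Y, IsPolyVerts n m w ∧ Set.range w ⊆ B ∧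
      ∃ T : X →ᵃ[ℝ] Y,
        (∀ x ∈ affineSpan ℝ (Set.range v), ∀ y ∈ affineSpan ℝ (Set.range v),
          (1 - ε) * dist x y ≤ dist (T x) (T y) ∧
          dist (T x) (T y) ≤ (1 + ε) * dist x y) ∧
        T '' (affineSpan ℝ (Set.range v) : Set X) =
          (affineSpan ℝ (Set.range w) : Set Y) ∧
        Metric.hausdorffDist (T '' Set.range v) (Set.range w) < ε

open Set Metric

noncomputable section PolyAux

variable {X : Type*} [NormedAddCommGroup X] [NormedSpace ℝ X]

def combo {n : ℕ} (f : Fin n → X) : (Fin n → ℝ) →ₗ[ℝ] X where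
  toFun c := ∑ j, c j • f j
  map_add' a b := by simp [add_smul, Finset.sum_add_distrib]
  map_smul' r a := by simp [smul_smul, Finset.smul_sum]

lemma combo_apply {n : ℕ} (f : Fin n → X) (c : Fin n → ℝ) :
    combo f c = ∑ j, c j • f j := rfl

lemma combo_single {n : ℕ} (f : Fin n → X) (j : Fin n) :
    combo f (Pi.single j 1) = f j := by
  rw [combo_apply, Finset.sum_eq_single j] <;> simp +contextual [Pi.single_apply]

lemma combo_range {n : ℕ} (f : Fin n → X) :
    LinearMap.range (combo f) = Submodule.span ℝ (Set.range f) := by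
  apply le_antisymm
  · rintro x ⟨c, rfl⟩
    rw [combo_apply]
    exact Submodule.sum_mem _ fun j _ =>
      Submodule.smul_mem _ _ (Submodule.subset_span (Set.mem_range_self j))
  · rw [Submodule.span_le]
    rintro x ⟨j, rfl⟩
    exact ⟨Pi.single j 1, combo_single f j⟩

lemma combo_injective {n : ℕ} {f : Fin n → X} (hf : LinearIndependent ℝ f) :
    Function.Injective (combo f) := by
  rw [← LinearMap.ker_eq_bot, LinearMap.ker_eq_bot']
  intro c hc
  exact funext (Fintype.linearIndependent_iff.mp hf c hc)

lemma combo_anti {n : ℕ} {f : Fin n → X} (hf : LinearIndependent ℝ f) :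
    ∃ ρ > (0:ℝ), ∀ c, ρ * ‖c‖ ≤ ‖combo f c‖ := by
  have hinj := combo_injective hf
  let e := LinearEquiv.ofInjective (combo f) hinj
  let e' := e.toContinuousLinearEquiv
  obtain ⟨K, hK⟩ : ∃ K : NNReal, AntilipschitzWith K e' := ⟨_, e'.antilipschitz⟩
  refine ⟨(K + 1 : ℝ)⁻¹, by positivity, fun c => ?_⟩
  have h1 : ‖c‖ ≤ K * ‖combo f c‖ := by
    have := hK.le_mul_dist c 0
    simpa [e', dist_eq_norm, LinearEquiv.coe_toContinuousLinearEquiv', e,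
      Submodule.coe_norm, LinearEquiv.ofInjective_apply] using this
  have h2 : ‖c‖ ≤ (K + 1) * ‖combo f c‖ := by nlinarith [norm_nonneg (combo f c)]
  rw [inv_mul_le_iff₀ (by positivity)]
  linarith

lemma combo_bound {n : ℕ} (f : Fin n → X) :
    ∃ K ≥ (0:ℝ), ∀ c, ‖combo f c‖ ≤ K * ‖c‖ := by
  refine ⟨‖LinearMap.toContinuousLinearMap (combo f)‖, norm_nonneg _, fun c => ?_⟩
  exact (LinearMap.toContinuousLinearMap (combo f)).le_opNorm c

/-- Extract a basis (indexed inside the family) and coordinates for a polyhedron. -/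
lemma exists_data {n m : ℕ} (v : Fin (n + m + 1) → X) (hv : IsPolyVerts n m v) :
    ∃ BC : (Fin n → Fin (n + m + 1)) × (Fin (n + m + 1) → Fin n → ℝ),
      LinearIndependent ℝ (fun j => v (BC.1 j) - v 0) ∧
      ∀ i, v i - v 0 = combo (fun j => v (BC.1 j) - v 0) (BC.2 i) := by
  classical
  set u : Fin (n + m + 1) → X := fun i => v i - v 0 with hu
  have hspan : vectorSpan ℝ (Set.range v) = Submodule.span ℝ (Set.range u) := by
    rw [vectorSpan_range_eq_span_range_vsub_right ℝ v 0]
    simp [hu, vsub_eq_sub]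
  obtain ⟨b, hbsub, hbspan, hbind⟩ := exists_linearIndependent ℝ (Set.range u)
  have hbfin : b.Finite := (Set.finite_range u).subset hbsub
  have : Fintype b := hbfin.fintype
  have hcard : Fintype.card b = n := by
    have h1 : Module.finrank ℝ (Submodule.span ℝ b) = b.toFinset.card :=
      finrank_span_set_eq_card hbind
    rw [hbspan, ← hspan, hv.2.2] at h1
    rw [h1, Set.toFinset_card]
  let e : Fin n ≃ b := (Fintype.equivFinOfCardEq hcard).symm
  have hB : ∀ j : Fin n, ∃ i, u i = (e j : X) := fun j => hbsub (e j).2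
  choose B hBspec using hB
  have hub : (fun j => v (B j) - v 0) = fun j => ((e j : X)) := by
    funext j; rw [← hBspec j]
  have hind : LinearIndependent ℝ (fun j => v (B j) - v 0) := by
    rw [hub]
    exact hbind.comp e (Equiv.injective e)
  have hrangeB : Set.range (fun j => v (B j) - v 0) = b := by
    rw [hub]
    ext x
    constructor
    · rintro ⟨j, rfl⟩; exact (e j).2
    · intro hx; exact ⟨(Fintype.equivFinOfCardEq hcard) ⟨x, hx⟩, by simp [e]⟩
  have hmem : ∀ i, u i ∈ Submodule.span ℝ (Set.range (fun j => v (B j) - v 0)) := by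
    intro i
    rw [hrangeB, hbspan]
    exact Submodule.subset_span (Set.mem_range_self i)
  have hC : ∀ i, ∃ c : Fin n → ℝ, (∑ j, c j • (v (B j) - v 0)) = u i := by
    intro i
    exact (Submodule.mem_span_range_iff_exists_fun ℝ).mp (hmem i)
  choose C hCspec using hC
  exact ⟨(B, C), hind, fun i => by rw [combo_apply, hCspec i]⟩

set_option maxHeartbeats 1000000 in
/-- The key countable-representation lemma for a fixed combinatorial type `(n, m)`. -/
lemma key (A : Set X) (n m : ℕ) :
    ∃ W : Set (Fin (n + m + 1) → X), W.Countable ∧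
      (∀ w ∈ W, IsPolyVerts n m w ∧ Set.range w ⊆ A) ∧
      ∀ ε > (0:ℝ), ∀ v : Fin (n + m + 1) → X, IsPolyVerts n m v → Set.range v ⊆ A →
        ∃ w ∈ W, ∃ T : X →ᵃ[ℝ] X,
          (∀ x ∈ affineSpan ℝ (Set.range v), ∀ y ∈ affineSpan ℝ (Set.range v),
            (1 - ε) * dist x y ≤ dist (T x) (T y) ∧
            dist (T x) (T y) ≤ (1 + ε) * dist x y) ∧
          T '' (affineSpan ℝ (Set.range v) : Set X) =
            (affineSpan ℝ (Set.range w) : Set X) ∧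
          Metric.hausdorffDist (T '' Set.range v) (Set.range w) < ε := by
  classical
  let Q := {v : Fin (n + m + 1) → X // IsPolyVerts n m v ∧ Set.range v ⊆ A}
  choose BCf hind hrep using fun q : Q => exists_data q.1 q.2.1
  let E : Q → ((Fin n → ℝ) →ₗ[ℝ] X) := fun q => combo (fun j => q.1 ((BCf q).1 j) - q.1 0)
  let S := Metric.sphere (0 : Fin n → ℝ) 1
  let g : Q → C(S, ℝ) := fun q =>
    ⟨fun s => ‖E q s.1‖,
      continuous_norm.comp ((E q).continuous_of_finiteDimensional.comp continuous_subtype_val)⟩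
  let Φ : Q → ((Fin (n + m + 1) → Fin n → ℝ) × C(S, ℝ)) := fun q => ((BCf q).2, g q)
  obtain ⟨s, hs_cnt, hs_dense⟩ := TopologicalSpace.exists_countable_dense ↥(Set.range Φ)
  choose pre hpre using fun d : ↥(Set.range Φ) => d.2
  let W : Set (Fin (n + m + 1) → X) := Set.range (fun d : ↥s => (pre d.val).val)
  have hs_cnt' : Countable ↥s := hs_cnt.to_subtype
  refine ⟨W, Set.countable_range _, ?_, ?_⟩
  · rintro w ⟨d, rfl⟩
    exact (pre d.val).2
  intro ε hε v hv hvA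
  set q : Q := ⟨v, hv, hvA⟩ with hq
  -- constants
  obtain ⟨ρ, hρ, hanti⟩ := combo_anti (hind q)
  obtain ⟨K, hK0, hKb⟩ := combo_bound (fun j => q.1 ((BCf q).1 j) - q.1 0)
  set δ : ℝ := min 1 (min (ε * ρ) (ε / (2 * (K + 1)))) with hδdef
  have hδpos : 0 < δ := lt_min one_pos (lt_min (by positivity) (by positivity))
  -- find a close representative
  have hm : Φ q ∈ Set.range Φ := ⟨q, rfl⟩
  obtain ⟨d, hd_s, hd_dist⟩ : ∃ d ∈ s,
      dist d (⟨Φ q, hm⟩ : ↥(Set.range Φ)) < δ := by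
    obtain ⟨y, hy1, hy2⟩ := Metric.dense_iff.mp hs_dense ⟨Φ q, hm⟩ δ hδpos
    exact ⟨y, hy2, Metric.mem_ball.mp hy1⟩
  set q' : Q := pre d with hq'def
  have hΦq' : Φ q' = d.1 := hpre d
  set w : Fin (n + m + 1) → X := q'.1 with hwdef
  have hwW : w ∈ W := ⟨⟨d, hd_s⟩, rfl⟩
  have hdist : dist (Φ q') (Φ q) < δ := by
    rw [hΦq']
    exact hd_dist
  -- component estimates
  have hdC : ∀ i, ‖(BCf q).2 i - (BCf q').2 i‖ < δ := by
    intro i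
    have h1 : dist ((BCf q').2) ((BCf q).2) < δ :=
      lt_of_le_of_lt (by rw [Prod.dist_eq]; exact le_max_left _ _) hdist
    have h2 := (dist_pi_lt_iff hδpos).mp h1 i
    rw [dist_comm, dist_eq_norm] at h2
    exact h2
  have hgS : dist (g q') (g q) < δ :=
    lt_of_le_of_lt (by rw [Prod.dist_eq]; exact le_max_right _ _) hdist
  have hg : ∀ c : Fin n → ℝ, |‖E q' c‖ - ‖E q c‖| ≤ δ * ‖c‖ := by
    intro c
    by_cases hc : c = 0
    · simp [hc]
    · have hcn : ‖c‖ ≠ 0 := norm_ne_zero_iff.mpr hc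
      set s₀ : Fin n → ℝ := ‖c‖⁻¹ • c with hs₀def
      have hs₀ : ‖s₀‖ = 1 := by
        rw [hs₀def, norm_smul, norm_inv, norm_norm, inv_mul_cancel₀ hcn]
      have hs₀S : s₀ ∈ S := mem_sphere_zero_iff_norm.mpr hs₀
      have hds := le_trans (ContinuousMap.dist_apply_le_dist (⟨s₀, hs₀S⟩ : S)) hgS.le
      have hds' : |‖E q' s₀‖ - ‖E q s₀‖| ≤ δ := by
        rw [Real.dist_eq] at hds
        exact hds
      have hcs : ‖c‖ • s₀ = c := smul_inv_smul₀ hcn c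
      have hEq : ∀ r : Q, ‖E r c‖ = ‖c‖ * ‖E r s₀‖ := by
        intro r
        rw [← hcs, map_smul, norm_smul, norm_norm, hcs]
      rw [hEq q', hEq q, ← mul_sub, abs_mul, abs_of_nonneg (norm_nonneg c), mul_comm]
      exact mul_le_mul_of_nonneg_right hds' (norm_nonneg c)
  have hbilip : ∀ c : Fin n → ℝ,
      (1 - ε) * ‖E q c‖ ≤ ‖E q' c‖ ∧ ‖E q' c‖ ≤ (1 + ε) * ‖E q c‖ := by
    intro c
    have h1 := abs_le.mp (hg c)
    have h2 : ρ * ‖c‖ ≤ ‖E q c‖ := hanti c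
    have h3 : δ ≤ ε * ρ := le_trans (min_le_right _ _) (min_le_left _ _)
    have h4 : δ * ‖c‖ ≤ ε * ‖E q c‖ := by nlinarith [norm_nonneg c]
    constructor <;> nlinarith [norm_nonneg (E q c)]
  -- the affine map
  obtain ⟨Vc, hVc⟩ := Submodule.exists_isCompl (LinearMap.range (E q))
  set proj := (LinearMap.range (E q)).linearProjOfIsCompl Vc hVc with hprojdef
  set einv := (LinearEquiv.ofInjective (E q) (combo_injective (hind q))).symm with heinvdef
  set L : X →ₗ[ℝ] X :=
    (E q').comp ((einv : (LinearMap.range (E q)) →ₗ[ℝ] (Fin n → ℝ)).comp proj) with hLdef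
  have hLE : ∀ c, L (E q c) = E q' c := by
    intro c
    have h1 : proj (E q c) = ⟨E q c, LinearMap.mem_range_self _ c⟩ :=
      Submodule.linearProjOfIsCompl_apply_left hVc ⟨E q c, LinearMap.mem_range_self _ c⟩
    have h2 : einv ⟨E q c, LinearMap.mem_range_self _ c⟩ = c := by
      rw [LinearEquiv.symm_apply_eq]
      exact Subtype.ext (LinearEquiv.ofInjective_apply _ _).symm
    simp only [hLdef, LinearMap.comp_apply, h1, LinearEquiv.coe_coe, h2]
  set T : X →ᵃ[ℝ] X :=
    { toFun := fun x => w 0 + L (x - v 0)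
      linear := L
      map_vadd' := by
        intro p u
        simp only [vadd_eq_add]
        show w 0 + L (u + p - v 0) = L u + (w 0 + L (p - v 0))
        rw [add_sub_assoc, map_add]
        abel } with hTdef
  have hTapp : ∀ x, T x = w 0 + L (x - v 0) := fun x => rfl
  -- span characterizations
  have hVv : LinearMap.range (E q) = vectorSpan ℝ (Set.range v) := by
    rw [vectorSpan_range_eq_span_range_vsub_right ℝ v 0]
    simp only [vsub_eq_sub]
    apply le_antisymm
    · show LinearMap.range (combo _) ≤ _
      rw [combo_range, Submodule.span_le]
      rintro x ⟨j, rfl⟩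
      exact Submodule.subset_span ⟨(BCf q).1 j, rfl⟩
    · rw [Submodule.span_le]
      rintro x ⟨i, rfl⟩
      exact ⟨(BCf q).2 i, (hrep q i).symm⟩
  have hVw : LinearMap.range (E q') = vectorSpan ℝ (Set.range w) := by
    rw [vectorSpan_range_eq_span_range_vsub_right ℝ w 0]
    simp only [vsub_eq_sub]
    apply le_antisymm
    · show LinearMap.range (combo _) ≤ _
      rw [combo_range, Submodule.span_le]
      rintro x ⟨j, rfl⟩
      exact Submodule.subset_span ⟨(BCf q').1 j, rfl⟩
    · rw [Submodule.span_le]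
      rintro x ⟨i, rfl⟩
      exact ⟨(BCf q').2 i, (hrep q' i).symm⟩
  have hmemv : ∀ x, x ∈ affineSpan ℝ (Set.range v) ↔ ∃ c, x = v 0 + E q c := by
    intro x
    rw [← AffineSubspace.vsub_right_mem_direction_iff_mem
      (mem_affineSpan ℝ (Set.mem_range_self 0)) x, direction_affineSpan, ← hVv]
    constructor
    · rintro ⟨c, hc⟩
      refine ⟨c, ?_⟩
      rw [hc]
      simp [vsub_eq_sub]
    · rintro ⟨c, rfl⟩
      exact ⟨c, by simp [vsub_eq_sub]⟩
  have hmemw : ∀ x, x ∈ affineSpan ℝ (Set.range w) ↔ ∃ c, x = w 0 + E q' c := by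
    intro x
    rw [← AffineSubspace.vsub_right_mem_direction_iff_mem
      (mem_affineSpan ℝ (Set.mem_range_self 0)) x, direction_affineSpan, ← hVw]
    constructor
    · rintro ⟨c, hc⟩
      refine ⟨c, ?_⟩
      rw [hc]
      simp [vsub_eq_sub]
    · rintro ⟨c, rfl⟩
      exact ⟨c, by simp [vsub_eq_sub]⟩
  refine ⟨w, hwW, T, ?_, ?_, ?_⟩
  · intro x hx y hy
    obtain ⟨c, rfl⟩ := (hmemv x).mp hx
    obtain ⟨c', rfl⟩ := (hmemv y).mp hy
    have hT : T (v 0 + E q c) - T (v 0 + E q c') = E q' (c - c') := by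
      rw [hTapp, hTapp]
      simp only [add_sub_cancel_left]
      rw [hLE, hLE, map_sub]
      abel
    have hxy : (v 0 + E q c) - (v 0 + E q c') = E q (c - c') := by
      rw [map_sub]; abel
    rw [dist_eq_norm, dist_eq_norm, hT, hxy]
    exact hbilip (c - c')
  · ext x
    simp only [Set.mem_image, SetLike.mem_coe]
    constructor
    · rintro ⟨y, hy, rfl⟩
      obtain ⟨c, rfl⟩ := (hmemv y).mp hy
      refine (hmemw _).mpr ⟨c, ?_⟩
      rw [hTapp]
      simp only [add_sub_cancel_left]
      rw [hLE]
    · intro hx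
      obtain ⟨c, rfl⟩ := (hmemw x).mp hx
      refine ⟨v 0 + E q c, (hmemv _).mpr ⟨c, rfl⟩, ?_⟩
      rw [hTapp]
      simp only [add_sub_cancel_left]
      rw [hLE]
  · have hTv : ∀ i, T (v i) = w 0 + E q' ((BCf q).2 i) := by
      intro i
      rw [hTapp, show v i - v 0 = E q ((BCf q).2 i) from hrep q i, hLE]
    have hwi : ∀ i, w i = w 0 + E q' ((BCf q').2 i) := by
      intro i
      rw [← hrep q' i]
      abel
    have hdistp : ∀ i, dist (T (v i)) (w i) ≤ ε / 2 := by
      intro i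
      rw [hTv i, hwi i, dist_eq_norm]
      have heq : (w 0 + E q' ((BCf q).2 i)) - (w 0 + E q' ((BCf q').2 i))
          = E q' ((BCf q).2 i - (BCf q').2 i) := by
        rw [map_sub]; abel
      rw [heq]
      set cc := (BCf q).2 i - (BCf q').2 i with hcc
      have h1 := abs_le.mp (hg cc)
      have h2 : ‖E q cc‖ ≤ K * ‖cc‖ := hKb cc
      have h3 : ‖cc‖ ≤ δ := (hdC i).le
      have h4 : δ ≤ 1 := min_le_left _ _
      have h5 : δ ≤ ε / (2 * (K + 1)) := le_trans (min_le_right _ _) (min_le_right _ _)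
      have h6 : δ * (2 * (K + 1)) ≤ ε := by
        rw [← le_div_iff₀ (by positivity)]
        exact h5
      have hb1 : ‖E q' cc‖ ≤ ‖E q cc‖ + δ * ‖cc‖ := by linarith [h1.2]
      have hb2 : ‖E q cc‖ + δ * ‖cc‖ ≤ K * ‖cc‖ + 1 * ‖cc‖ := by
        have := mul_le_mul_of_nonneg_right h4 (norm_nonneg cc)
        linarith
      have hb3 : K * ‖cc‖ + 1 * ‖cc‖ ≤ K * δ + 1 * δ := by
        have := mul_le_mul_of_nonneg_left h3 hK0
        linarith [h3]
      have hb4 : K * δ + 1 * δ ≤ ε / 2 := by nlinarith [h6]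
      linarith
    have hH : Metric.hausdorffDist (T '' Set.range v) (Set.range w) ≤ ε / 2 := by
      apply Metric.hausdorffDist_le_of_mem_dist (by positivity)
      · rintro x ⟨y, ⟨i, rfl⟩, rfl⟩
        exact ⟨w i, Set.mem_range_self i, hdistp i⟩
      · rintro y ⟨i, rfl⟩
        exact ⟨T (v i), Set.mem_image_of_mem _ (Set.mem_range_self i), by
          rw [dist_comm]; exact hdistp i⟩
    exact lt_of_le_of_lt hH (by linarith)

end PolyAux

/-- Theorem 4.9: every subset `A` of a Banach space contains a countable subset `A₀`
such that `A` is strongly finitely representable in `A₀`. -/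

theorem stmt16 {X : Type*} [NormedAddCommGroup X] [NormedSpace ℝ X] [CompleteSpace X]
    (A : Set X) :
    ∃ A₀ : Set X, A₀ ⊆ A ∧ A₀.Countable ∧ StronglyFinRep A A₀ := by
  classical
  choose W hWc hWmem hWrep using fun nm : ℕ × ℕ => key A nm.1 nm.2
  refine ⟨⋃ nm : ℕ × ℕ, ⋃ w ∈ W nm, Set.range w, ?_, ?_, ?_⟩
  · intro x hx
    simp only [Set.mem_iUnion] at hx
    obtain ⟨nm, w, hw, i, rfl⟩ := hx
    exact (hWmem nm w hw).2 (Set.mem_range_self i)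
  · exact Set.countable_iUnion fun nm => Set.Countable.biUnion (hWc nm)
      (fun w _ => (Set.finite_range w).countable)
  · intro ε hε n m v hv hvA
    obtain ⟨w, hwW, T, hT1, hT2, hT3⟩ := hWrep (n, m) ε hε v hv hvA
    refine ⟨w, (hWmem (n, m) w hwW).1, ?_, T, hT1, hT2, hT3⟩
    rintro x ⟨i, rfl⟩
    simp only [Set.mem_iUnion]
    exact ⟨(n, m), w, hwW, i, rfl⟩
end

section
/- For every bounded subset B of a metric space M, there exists a countable subset B₀ ⊆ B such that the Kuratowski measures of noncompactness coincide: α(B₀) = α(B). -/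
/-! At a fixed scale `d ≥ 0`, covering `B` by `n` sets of diameter at most `d` is the same as
properly `n`-colouring the graph on `B` that joins points at distance greater than `d`, so by the
De Bruijn–Erdős compactness theorem it is decided by the finite subsets of `B`. If every countable
subset of `B` can be covered at scale `d`, the number of pieces is bounded uniformly, since
otherwise the countable union of the badly coverable subsets could not be covered at all. Hence
every scale at which `B` cannot be covered is witnessed by a countable subset, and the union of the
witnesses for the rational scales is a countable `B₀` with `α(B₀) = α(B)`. -/

open Set

theorem SimpleGraph.colorable_of_forall_finite_induce {V : Type*} {G : SimpleGraph V} {n : ℕ}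
    (h : ∀ s : Set V, s.Finite → (G.induce s).Colorable n) : G.Colorable n :=
  nonempty_hom_of_forall_finite_subgraph_hom fun G' hG' =>
    (h G'.verts hG').some.comp ⟨id, G'.adj_sub⟩

theorem Real.sInf_eq_of_forall_rat_mem {S T : Set ℝ} (hS : IsUpperSet S) (hS' : BddBelow S)
    (hTS : T ⊆ S) (hST : ∀ q : ℚ, (q : ℝ) ∈ S → (q : ℝ) ∈ T) : sInf S = sInf T := by
  rcases S.eq_empty_or_nonempty with rfl | ⟨s, hs⟩
  · rw [subset_empty_iff.1 hTS]
  have hT : BddBelow T := hS'.mono hTS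
  have hle : ∀ s ∈ S, sInf T ≤ s := fun s hs =>
    le_of_forall_lt_rat_imp_le fun q hq => csInf_le hT (hST q (hS hq.le hs))
  obtain ⟨q, hq⟩ := exists_rat_gt s
  exact le_antisymm (csInf_le_csInf hS' ⟨q, hST q (hS hq.le hs)⟩ hTS) (le_csInf ⟨s, hs⟩ hle)

namespace Kuratowski

variable {M : Type*} [PseudoMetricSpace M]

variable (M) in
def farGraph (d : ℝ) : SimpleGraph M where
  Adj x y := x ≠ y ∧ d < dist x y
  symm := ⟨fun x y h => ⟨h.1.symm, dist_comm x y ▸ h.2⟩⟩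
  loopless := ⟨fun _ h => h.1 rfl⟩

@[simp]
theorem farGraph_adj {d : ℝ} {x y : M} : (farGraph M d).Adj x y ↔ x ≠ y ∧ d < dist x y :=
  Iff.rfl

def CoverableBy (B : Set M) (d : ℝ) (n : ℕ) : Prop :=
  ∃ F : Finset (Set M), F.card ≤ n ∧ (B ⊆ ⋃ E ∈ F, E) ∧ ∀ E ∈ F, Metric.ediam E ≤ ENNReal.ofReal d

theorem CoverableBy.mono {B₀ B : Set M} {d : ℝ} {n : ℕ} (h : CoverableBy B d n) (hB : B₀ ⊆ B) :
    CoverableBy B₀ d n :=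
  let ⟨F, hF, hcov, hdiam⟩ := h
  ⟨F, hF, hB.trans hcov, hdiam⟩

theorem colorable_induce_farGraph_iff {B : Set M} {d : ℝ} {n : ℕ} (hd : 0 ≤ d) :
    ((farGraph M d).induce B).Colorable n ↔ CoverableBy B d n := by
  classical
  constructor
  · rintro ⟨c⟩
    refine ⟨Finset.univ.image fun i => Subtype.val '' (c ⁻¹' {i}),
      Finset.card_image_le.trans (by simp), ?_, ?_⟩
    · intro x hx
      exact mem_biUnion (Finset.mem_image_of_mem _ (Finset.mem_univ (c ⟨x, hx⟩)))
        ⟨⟨x, hx⟩, rfl, rfl⟩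
    · simp only [Finset.mem_image, Finset.mem_univ, true_and, forall_exists_index]
      rintro _ i rfl
      refine Metric.ediam_le ?_
      rintro _ ⟨u, hu, rfl⟩ _ ⟨v, hv, rfl⟩
      rw [edist_dist]
      refine ENNReal.ofReal_le_ofReal (not_lt.1 fun hlt => ?_)
      obtain rfl | huv := eq_or_ne u v
      · exact (hlt.trans_eq (dist_self _)).not_ge hd
      exact c.valid (farGraph_adj.2 ⟨Subtype.coe_ne_coe.2 huv, hlt⟩) (hu.trans hv.symm)
  · rintro ⟨F, hF, hcov, hdiam⟩
    have hsel : ∀ x : B, ∃ E ∈ F, (x : M) ∈ E := fun x => by simpa using hcov x.2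
    choose E hEF hxE using hsel
    obtain ⟨emb⟩ : Nonempty (F ↪ Fin n) :=
      Function.Embedding.nonempty_of_card_le (by simpa using hF)
    refine ⟨SimpleGraph.Coloring.mk (fun x => emb ⟨E x, hEF x⟩) fun {x y} hxy heq => ?_⟩
    have hE : E x = E y := congrArg Subtype.val (emb.injective heq)
    have : edist (x : M) y ≤ ENNReal.ofReal d :=
      (Metric.edist_le_ediam_of_mem (hxE x) (hE ▸ hxE y)).trans (hdiam _ (hEF x))
    rw [edist_dist, ENNReal.ofReal_le_ofReal_iff hd] at this
    exact (farGraph_adj.1 hxy).2.not_ge this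

theorem coverableBy_of_forall_finite {B : Set M} {d : ℝ} {n : ℕ} (hd : 0 ≤ d)
    (h : ∀ C ⊆ B, C.Finite → CoverableBy C d n) : CoverableBy B d n := by
  refine (colorable_induce_farGraph_iff hd).1 <| SimpleGraph.colorable_of_forall_finite_induce
    fun s hs => ?_
  have hsB : Subtype.val '' s ⊆ B := by rintro _ ⟨x, -, rfl⟩; exact x.2
  exact ((colorable_induce_farGraph_iff hd).2 (h _ hsB (hs.image _))).of_hom
    (SimpleGraph.induceHom (SimpleGraph.Embedding.induce B).toHom (mapsTo_image _ s))

theorem exists_coverableBy_of_forall_countable {B : Set M} {d : ℝ} (hd : 0 ≤ d)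
    (h : ∀ C ⊆ B, C.Countable → ∃ n, CoverableBy C d n) : ∃ n, CoverableBy B d n := by
  suffices ∃ n, ∀ C ⊆ B, C.Countable → CoverableBy C d n from
    let ⟨n, hn⟩ := this
    ⟨n, coverableBy_of_forall_finite hd fun C hCB hC => hn C hCB hC.countable⟩
  by_contra! hbad
  choose C hCB hCc hC using hbad
  obtain ⟨n, hn⟩ := h (⋃ n, C n) (iUnion_subset hCB) (countable_iUnion hCc)
  exact hC n (hn.mono (subset_iUnion C n))

def coverDiams (B : Set M) : Set ℝ :=
  {d | 0 < d ∧ ∃ n, CoverableBy B d n}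

theorem kuratowski_eq_sInf_coverDiams (B : Set M) : kuratowski B = sInf (coverDiams B) := by
  refine congrArg sInf (ext fun d => and_congr_right fun _ => ⟨?_, ?_⟩)
  · rintro ⟨F, hF⟩
    exact ⟨F.card, F, le_rfl, hF⟩
  · rintro ⟨n, F, -, hF⟩
    exact ⟨F, hF⟩

theorem isUpperSet_coverDiams (B : Set M) : IsUpperSet (coverDiams B) := by
  rintro d d' hdd' ⟨hd, n, F, hF, hcov, hdiam⟩
  exact ⟨hd.trans_le hdd', n, F, hF, hcov, fun E hE => (hdiam E hE).trans (by gcongr)⟩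

theorem bddBelow_coverDiams (B : Set M) : BddBelow (coverDiams B) :=
  ⟨0, fun _ hd => hd.1.le⟩

theorem coverDiams_anti {B₀ B : Set M} (h : B₀ ⊆ B) : coverDiams B ⊆ coverDiams B₀ :=
  fun _ ⟨hd, n, hn⟩ => ⟨hd, n, hn.mono h⟩

theorem exists_countable_coverDiams (B : Set M) (d : ℝ) :
    ∃ C ⊆ B, C.Countable ∧ (d ∈ coverDiams C → d ∈ coverDiams B) := by
  by_contra! h
  obtain ⟨⟨hd, -⟩, hdB⟩ := h ∅ (empty_subset B) countable_empty
  exact hdB ⟨hd, exists_coverableBy_of_forall_countable hd.le fun C hCB hC => (h C hCB hC).1.2⟩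

end Kuratowski

open Kuratowski in
theorem stmt19_general {M : Type*} [MetricSpace M] (B : Set M) :
    ∃ B₀ : Set M, B₀ ⊆ B ∧ B₀.Countable ∧ kuratowski B₀ = kuratowski B := by
  choose C hCB hCc hC using fun q : ℚ => exists_countable_coverDiams B q
  have hB₀ : (⋃ q, C q) ⊆ B := iUnion_subset hCB
  refine ⟨⋃ q, C q, hB₀, countable_iUnion hCc, ?_⟩
  rw [kuratowski_eq_sInf_coverDiams, kuratowski_eq_sInf_coverDiams]
  exact Real.sInf_eq_of_forall_rat_mem (isUpperSet_coverDiams _) (bddBelow_coverDiams _)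
    (coverDiams_anti hB₀) fun q hq => hC q (coverDiams_anti (subset_iUnion C q) hq)

/-- Main theorem: countable determination of the Kuratowski measure of noncompactness.
Every bounded subset of a metric space contains a countable subset with the same
Kuratowski measure. -/
theorem stmt19 {M : Type*} [MetricSpace M] (B : Set M) (hB : Bornology.IsBounded B) :
    ∃ B₀ : Set M, B₀ ⊆ B ∧ B₀.Countable ∧ kuratowski B₀ = kuratowski B :=
  stmt19_general B
end
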